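/- arXiv:1501.05196 — 2 statements merged into one kernel-verified Lean document; each statement's English description precedes it below -/
import Mathlib

section
/- Let X be a real Banach space that does not contain an isomorphic copy of c₀. Then every function F : [a,b] → L(X) of bounded semivariation on [a,b] is simply regulated: for each x ∈ X, the function t ↦ F(t)x has a left limit in Y at every t ∈ (a,b] and a right limit at every t ∈ [a,b). -/
open Filter Topology

/-- A division `a = α 0 < α 1 < … < α n = b` of the interval `[a,b]`. -/
def IsDivision (a b : ℝ) (n : ℕ) (α : ℕ → ℝ) : Prop :=
  α 0 = a ∧ α n = b ∧ ∀ i < n, α i < α (i + 1)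

/-- The semivariation `SV_a^b(F)` of `F : [a,b] → L(X,Y)`. -/
noncomputable def semivar {X Y : Type*} [NormedAddCommGroup X] [NormedSpace ℝ X]
    [NormedAddCommGroup Y] [NormedSpace ℝ Y]
    (a b : ℝ) (F : ℝ → X →L[ℝ] Y) : ENNReal :=
  ⨆ (n : ℕ) (α : ℕ → ℝ) (_ : IsDivision a b n α)
    (x : ℕ → X) (_ : ∀ j, ‖x j‖ ≤ 1),
    ENNReal.ofReal ‖∑ j ∈ Finset.range n, (F (α (j + 1)) - F (α j)) (x j)‖

/-- The (Jordan) variation `var_a^b(G)` of a function with values in a normed space. -/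
noncomputable def evar {E : Type*} [NormedAddCommGroup E] (a b : ℝ) (G : ℝ → E) : ENNReal :=
  ⨆ (n : ℕ) (α : ℕ → ℝ) (_ : IsDivision a b n α),
    ENNReal.ofReal (∑ j ∈ Finset.range n, ‖G (α (j + 1)) - G (α j)‖)

open ZeroAtInfty

/-- `X` contains an isomorphic copy of `c₀`: there is a continuous linear map
`ψ : c₀ → X` that is bounded above and below. -/
def ContainsC0Copy (X : Type*) [NormedAddCommGroup X] [NormedSpace ℝ X] : Prop :=
  ∃ ψ : C₀(ℕ, ℝ) →L[ℝ] X, ∃ C₁ C₂ : ℝ, 0 < C₁ ∧ 0 < C₂ ∧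
    ∀ u : C₀(ℕ, ℝ), C₁ * ‖u‖ ≤ ‖ψ u‖ ∧ ‖ψ u‖ ≤ C₂ * ‖u‖

section SV
variable {X : Type*} [NormedAddCommGroup X] [NormedSpace ℝ X]
  {a b : ℝ} {F : ℝ → X →L[ℝ] X}

lemma div_sum_le (hF : semivar a b F ≠ ⊤) {n : ℕ} {α : ℕ → ℝ}
    (hα : IsDivision a b n α) {x : ℕ → X} (hx : ∀ j, ‖x j‖ ≤ 1) :
    ‖∑ j ∈ Finset.range n, (F (α (j + 1)) - F (α j)) (x j)‖ ≤ (semivar a b F).toReal := by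
  have h : ENNReal.ofReal ‖∑ j ∈ Finset.range n, (F (α (j + 1)) - F (α j)) (x j)‖
      ≤ semivar a b F :=
    le_iSup_of_le n (le_iSup_of_le α (le_iSup_of_le hα (le_iSup_of_le x
      (le_iSup_of_le hx le_rfl))))
  rw [← ENNReal.ofReal_le_iff_le_toReal hF] at *
  exact h

lemma key_bound (hab : a < b) (hF : semivar a b F ≠ ⊤)
    (p q c : ℕ → ℝ) (z : X) (hz : ‖z‖ ≤ 1) (n : ℕ)
    (h1 : ∀ k < n, a < p k) (h2 : ∀ k < n, p k < q k) (h3 : ∀ k < n, q k < b)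
    (h4 : ∀ k, k + 1 < n → q k < p (k + 1)) (hc : ∀ k < n, |c k| ≤ 1) :
    ‖∑ k ∈ Finset.range n, c k • (F (q k) z - F (p k) z)‖ ≤ (semivar a b F).toReal := by
  classical
  set α : ℕ → ℝ := fun j => if j = 0 then a else if 2*n < j then b
    else if j % 2 = 1 then p (j/2) else q (j/2 - 1) with hαdef
  set x : ℕ → X := fun j => if j % 2 = 1 ∧ j/2 < n then c (j/2) • z else 0 with hxdef
  have hαp : ∀ k < n, α (2*k+1) = p k := by
    intro k hk
    have e0 : ¬ (2*k+1 = 0) := by omega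
    have e1 : ¬ (2*n < 2*k+1) := by omega
    have e2 : (2*k+1) % 2 = 1 := by omega
    simp only [hαdef, e0, e1, e2, if_false, if_true, if_neg, if_pos]
    congr 1
    omega
  have hαq : ∀ k < n, α (2*k+2) = q k := by
    intro k hk
    have e0 : ¬ (2*k+2 = 0) := by omega
    have e1 : ¬ (2*n < 2*k+2) := by omega
    have e2 : ¬ ((2*k+2) % 2 = 1) := by omega
    simp only [hαdef, e0, e1, e2, if_false]
    congr 1
    omega
  have hdiv : IsDivision a b (2*n+1) α := by
    refine ⟨by simp [hαdef], ?_, ?_⟩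
    · have e0 : ¬ (2*n+1 = 0) := by omega
      have e1 : 2*n < 2*n+1 := by omega
      simp [hαdef, e0, e1]
    · intro i hi
      rcases Nat.even_or_odd i with ⟨k, hk⟩ | ⟨k, hk⟩
      · subst hk
        rcases Nat.eq_zero_or_pos k with rfl | hkpos
        · rcases Nat.eq_zero_or_pos n with rfl | hn
          · have hb : α (0+0+1) = b := by norm_num [hαdef]
            have ha : α (0+0) = a := by norm_num [hαdef]
            rw [hb, ha]; exact hab
          · have hp0 : α (0+0+1) = p 0 := by simpa using hαp 0 hn
            have ha : α (0+0) = a := by norm_num [hαdef]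
            rw [hp0, ha]; exact h1 0 hn
        · have hkn : k ≤ n := by omega
          have hql : α (k + k) = q (k-1) := by
            have := hαq (k-1) (by omega)
            rwa [show 2*(k-1)+2 = k + k by omega] at this
          rcases eq_or_lt_of_le hkn with rfl | hlt
          · have hb : α (k+k+1) = b := by
              have e0 : ¬ (k+k+1 = 0) := by omega
              have e1 : 2*k < k+k+1 := by omega
              simp [hαdef, e0, e1]
            rw [hql, hb]; exact h3 (k-1) (by omega)
          · have hp : α (k+k+1) = p k := by
              have := hαp k hlt
              rwa [show 2*k+1 = k+k+1 by omega] at this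
            rw [hql, hp]
            have := h4 (k-1) (by omega)
            rwa [show k-1+1 = k by omega] at this
      · subst hk
        have hkn : k < n := by omega
        have hq : α (2*k+1+1) = q k := by
          have := hαq k hkn
          rwa [show 2*k+2 = 2*k+1+1 by omega] at this
        rw [hαp k hkn] at *
        rw [hq]  -- goal : p k < q k  (after rewriting α (2*k+1))
        exact h2 k hkn
  have hx : ∀ j, ‖x j‖ ≤ 1 := by
    intro j
    by_cases h : j % 2 = 1 ∧ j/2 < n
    · simp only [hxdef, if_pos h]
      calc ‖c (j/2) • z‖ = |c (j/2)| * ‖z‖ := by rw [norm_smul, Real.norm_eq_abs]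
        _ ≤ 1 * 1 := by
            exact mul_le_mul (hc _ h.2) hz (norm_nonneg _) zero_le_one
        _ = 1 := by norm_num
    · simp [hxdef, if_neg h]
  have hsum : ∑ j ∈ Finset.range (2*n+1), (F (α (j + 1)) - F (α j)) (x j)
      = ∑ k ∈ Finset.range n, c k • (F (q k) z - F (p k) z) := by
    have himg : (Finset.range n).image (fun k => 2*k+1) ⊆ Finset.range (2*n+1) := by
      intro j hj
      simp only [Finset.mem_image, Finset.mem_range] at hj ⊢
      obtain ⟨k, hk, rfl⟩ := hj
      omega
    rw [← Finset.sum_subset himg]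
    · rw [Finset.sum_image (by intro i _ j _ h; simp only at h; omega)]
      refine Finset.sum_congr rfl ?_
      intro k hk
      rw [Finset.mem_range] at hk
      have hx' : x (2*k+1) = c k • z := by
        have hcnd : (2*k+1) % 2 = 1 ∧ (2*k+1)/2 < n := ⟨by omega, by omega⟩
        have e2 : (2*k+1)/2 = k := by omega
        simp only [hxdef, if_pos hcnd, e2]
      rw [show 2*k+1+1 = 2*k+2 by omega, hαq k hk, hαp k hk, hx']
      simp only [ContinuousLinearMap.sub_apply, map_smul, smul_sub]
    · intro j hjr hjn
      have : x j = 0 := by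
        rcases Nat.even_or_odd j with ⟨k, hk⟩ | ⟨k, hk⟩
        · have : ¬ (j % 2 = 1) := by omega
          simp [hxdef, this]
        · exfalso
          apply hjn
          simp only [Finset.mem_image, Finset.mem_range] at hjr ⊢
          exact ⟨k, by omega, by omega⟩
      rw [this]
      simp
  rw [← hsum]
  exact div_sum_le hF hdiv hx
end SV

lemma chain_lt {a b : ℝ} (p q : ℕ → ℝ)
    (hch : ∀ k, a < p k ∧ p k < q k ∧ q k < b ∧ q k < p (k+1)) :
    ∀ i j, i < j → q i < p j := by
  intro i j hij
  induction j with
  | zero => omega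
  | succ m ih =>
    rcases Nat.lt_or_ge i m with h | h
    · exact lt_trans (ih h) (lt_trans (hch m).2.1 (hch m).2.2.2)
    · have : i = m := by omega
      subst this
      exact (hch i).2.2.2

section SV2
variable {X : Type*} [NormedAddCommGroup X] [NormedSpace ℝ X]
  {a b : ℝ} {F : ℝ → X →L[ℝ] X}

/-- Key bound for a globally given chain of pairs, coefficients bounded by `r`. -/
lemma key_bound' (hab : a < b) (hF : semivar a b F ≠ ⊤)
    (p q : ℕ → ℝ) (hch : ∀ k, a < p k ∧ p k < q k ∧ q k < b ∧ q k < p (k+1))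
    (c : ℕ → ℝ) (z : X) (hz : ‖z‖ ≤ 1) (n : ℕ) (r : ℝ) (hr : 0 ≤ r)
    (hc : ∀ k < n, |c k| ≤ r) :
    ‖∑ k ∈ Finset.range n, c k • (F (q k) z - F (p k) z)‖ ≤ (semivar a b F).toReal * r := by
  have M0 : (0:ℝ) ≤ (semivar a b F).toReal := ENNReal.toReal_nonneg
  rcases eq_or_lt_of_le hr with rfl | hrpos
  · have hz' : ∀ k ∈ Finset.range n, c k • (F (q k) z - F (p k) z) = 0 := by
      intro k hk
      rw [Finset.mem_range] at hk
      have h0 : |c k| = 0 := le_antisymm (hc k hk) (abs_nonneg (c k))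
      have : c k = 0 := abs_eq_zero.mp h0
      simp [this]
    rw [Finset.sum_congr rfl hz']
    simp [M0]
  · have h := key_bound hab hF p q (fun k => r⁻¹ * c k) z hz n
      (fun k _ => (hch k).1) (fun k _ => (hch k).2.1) (fun k _ => (hch k).2.2.1)
      (fun k hk => (hch k).2.2.2)
      (by
        intro k hk
        rw [abs_mul, abs_inv, abs_of_pos hrpos, inv_mul_le_iff₀ hrpos]
        simpa using hc k hk)
    have heq : ∑ k ∈ Finset.range n, c k • (F (q k) z - F (p k) z)
        = r • ∑ k ∈ Finset.range n, (r⁻¹ * c k) • (F (q k) z - F (p k) z) := by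
      rw [Finset.smul_sum]
      refine Finset.sum_congr rfl fun k _ => ?_
      rw [smul_smul, ← mul_assoc, mul_inv_cancel₀ (ne_of_gt hrpos), one_mul]
    rw [heq, norm_smul, Real.norm_eq_abs, abs_of_pos hrpos, mul_comm]
    exact mul_le_mul_of_nonneg_right h hr

/-- Single increment bound. -/
lemma single_bound (hab : a < b) (hF : semivar a b F ≠ ⊤)
    (p q : ℕ → ℝ) (hch : ∀ k, a < p k ∧ p k < q k ∧ q k < b ∧ q k < p (k+1))
    (z : X) (hz : ‖z‖ ≤ 1) (k : ℕ) :
    ‖F (q k) z - F (p k) z‖ ≤ (semivar a b F).toReal := by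
  have h := key_bound hab hF (fun _ => p k) (fun _ => q k) (fun _ => 1) z hz 1
    (fun _ _ => (hch k).1) (fun _ _ => (hch k).2.1) (fun _ _ => (hch k).2.2.1)
    (fun _ h => by omega) (fun _ _ => by norm_num)
  simpa using h

/-- Row ℓ¹ bound: for a norm-≤1 functional, sums of `|f (increment)|` are bounded. -/
lemma row_bound (hab : a < b) (hF : semivar a b F ≠ ⊤)
    (p q : ℕ → ℝ) (hch : ∀ k, a < p k ∧ p k < q k ∧ q k < b ∧ q k < p (k+1))
    (z : X) (hz : ‖z‖ ≤ 1) (f : X →L[ℝ] ℝ) (hf : ‖f‖ ≤ 1) (n : ℕ) :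
    ∑ k ∈ Finset.range n, |f (F (q k) z - F (p k) z)| ≤ (semivar a b F).toReal := by
  classical
  set y : ℕ → X := fun k => F (q k) z - F (p k) z with hy
  set c : ℕ → ℝ := fun k => if f (y k) < 0 then -1 else 1 with hcdef
  have habs : ∀ k, |f (y k)| = c k * f (y k) := by
    intro k
    by_cases h : f (y k) < 0
    · simp [hcdef, h, abs_of_neg h]
    · simp [hcdef, h, abs_of_nonneg (not_lt.1 h)]
  have hsum : ∑ k ∈ Finset.range n, |f (y k)| = f (∑ k ∈ Finset.range n, c k • y k) := by
    rw [map_sum]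
    refine Finset.sum_congr rfl fun k _ => ?_
    rw [habs k, map_smul]
    simp [smul_eq_mul]
  rw [hsum]
  calc f (∑ k ∈ Finset.range n, c k • y k) ≤ |f (∑ k ∈ Finset.range n, c k • y k)| := le_abs_self _
    _ ≤ ‖f‖ * ‖∑ k ∈ Finset.range n, c k • y k‖ := f.le_opNorm _
    _ ≤ 1 * ((semivar a b F).toReal * 1) := by
        refine mul_le_mul hf ?_ (norm_nonneg _) zero_le_one
        exact key_bound' hab hF p q hch c z hz n 1 zero_le_one
          (fun k _ => by by_cases h : f (y k) < 0 <;> simp [hcdef, h])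
    _ = (semivar a b F).toReal := by ring

lemma row_summable (hab : a < b) (hF : semivar a b F ≠ ⊤)
    (p q : ℕ → ℝ) (hch : ∀ k, a < p k ∧ p k < q k ∧ q k < b ∧ q k < p (k+1))
    (z : X) (hz : ‖z‖ ≤ 1) (f : X →L[ℝ] ℝ) (hf : ‖f‖ ≤ 1) :
    Filter.Tendsto (fun k => |f (F (q k) z - F (p k) z)|) Filter.atTop (nhds 0) := by
  have hsummable : Summable (fun k => |f (F (q k) z - F (p k) z)|) :=
    summable_of_sum_range_le (fun k => abs_nonneg _)
      (fun n => row_bound hab hF p q hch z hz f hf n)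
  exact hsummable.tendsto_atTop_zero

/-- Escape from a finite-dimensional subspace: all but finitely many increments stay
`ε/4`-away from `V`. -/
lemma escape (hab : a < b) (hF : semivar a b F ≠ ⊤)
    (p q : ℕ → ℝ) (hch : ∀ k, a < p k ∧ p k < q k ∧ q k < b ∧ q k < p (k+1))
    (z : X) (hz : ‖z‖ ≤ 1) (ε : ℝ) (hε : 0 < ε)
    (hy : ∀ k, ε ≤ ‖F (q k) z - F (p k) z‖)
    (V : Submodule ℝ X) (hfin : FiniteDimensional ℝ V) :
    ∃ N, ∀ k ≥ N, ε/4 ≤ Metric.infDist (F (q k) z - F (p k) z) (V : Set X) := by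
  classical
  haveI := hfin
  set M := (semivar a b F).toReal with hM
  set y : ℕ → X := fun k => F (q k) z - F (p k) z with hydef
  by_contra hcon
  push_neg at hcon
  have hfreq : ∃ᶠ k in atTop, Metric.infDist (y k) (V : Set X) < ε/4 := by
    rw [Filter.frequently_atTop]
    intro N
    obtain ⟨k, hk1, hk2⟩ := hcon N
    exact ⟨k, hk1, hk2⟩
  obtain ⟨φ, hφmono, hφ⟩ := Filter.extraction_of_frequently_atTop hfreq
  have hVne : (V : Set X).Nonempty := ⟨0, V.zero_mem⟩
  have hvex : ∀ n, ∃ v ∈ (V : Set X), dist (y (φ n)) v < ε/4 :=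
    fun n => (Metric.infDist_lt_iff hVne).1 (hφ n)
  choose v hvV hvlt using hvex
  have hyM : ∀ k, ‖y k‖ ≤ M := fun k => single_bound hab hF p q hch z hz k
  -- the `v n` lie in a closed ball of `V`
  set vv : ℕ → V := fun n => ⟨v n, hvV n⟩ with hvvdef
  have hvvmem : ∀ n, vv n ∈ Metric.closedBall (0 : V) (M + ε/4) := by
    intro n
    rw [Metric.mem_closedBall, dist_zero_right]
    have h1 : ‖vv n‖ = ‖v n‖ := AddSubgroupClass.coe_norm V (vv n)
    rw [h1]
    calc ‖v n‖ ≤ ‖y (φ n)‖ + ‖y (φ n) - v n‖ := by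
          have := norm_sub_norm_le (y (φ n) - v n) (y (φ n))
          have h2 : y (φ n) - (y (φ n) - v n) = v n := by abel
          calc ‖v n‖ = ‖y (φ n) - (y (φ n) - v n)‖ := by rw [h2]
            _ ≤ ‖y (φ n)‖ + ‖y (φ n) - v n‖ := norm_sub_le _ _
      _ ≤ M + ε/4 := by
          refine add_le_add (hyM _) ?_
          rw [← dist_eq_norm]
          exact le_of_lt (hvlt n)
  obtain ⟨w, _, φ₂, hφ₂mono, hconv⟩ :=
    tendsto_subseq_of_bounded Metric.isBounded_closedBall hvvmem
  obtain ⟨n₀, hn₀⟩ := (Metric.tendsto_atTop.1 hconv) (ε/8) (by linarith)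
  set σ : ℕ → ℕ := fun i => φ (φ₂ (i + n₀)) with hσdef
  have hσmono : StrictMono σ := by
    intro i j hij
    exact hφmono (hφ₂mono (by omega))
  -- distance bounds along σ
  have hdist1 : ∀ i, ‖y (σ i) - v (φ₂ (i + n₀))‖ ≤ ε/4 := by
    intro i
    rw [← dist_eq_norm]
    exact le_of_lt (hvlt (φ₂ (i + n₀)))
  have hdist2 : ∀ i, ‖v (φ₂ (i + n₀)) - (w : X)‖ ≤ ε/8 := by
    intro i
    have h := hn₀ (i + n₀) (by omega)
    simp only [Function.comp_apply] at h
    rw [dist_eq_norm] at h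
    have hcoe : ‖vv (φ₂ (i + n₀)) - w‖ = ‖v (φ₂ (i + n₀)) - (w : X)‖ := by
      exact AddSubgroupClass.coe_norm V _
    rw [hcoe] at h
    exact le_of_lt h
  -- ‖w‖ is large
  have hwnorm : 5*ε/8 ≤ ‖(w : X)‖ := by
    have h1 := hy (σ 0)
    have h2 := hdist1 0
    have h3 := hdist2 0
    have : ‖y (σ 0)‖ ≤ ‖(w:X)‖ + (ε/4 + ε/8) := by
      calc ‖y (σ 0)‖ = ‖(w:X) + ((y (σ 0) - v (φ₂ (0 + n₀))) + (v (φ₂ (0 + n₀)) - (w:X)))‖ := by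
            congr 1; abel
        _ ≤ ‖(w:X)‖ + ‖(y (σ 0) - v (φ₂ (0 + n₀))) + (v (φ₂ (0 + n₀)) - (w:X))‖ := norm_add_le _ _
        _ ≤ ‖(w:X)‖ + (ε/4 + ε/8) := by
            refine add_le_add_right ?_ _
            exact le_trans (norm_add_le _ _) (add_le_add h2 h3)
    linarith
  -- chain for σ-subsequence
  have hchσ : ∀ k, a < p (σ k) ∧ p (σ k) < q (σ k) ∧ q (σ k) < b ∧ q (σ k) < p (σ (k+1)) := by
    intro k
    refine ⟨(hch (σ k)).1, (hch (σ k)).2.1, (hch (σ k)).2.2.1, ?_⟩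
    exact chain_lt p q hch (σ k) (σ (k+1)) (hσmono (by omega))
  -- key bound along σ with c = 1
  have hub : ∀ n : ℕ, ‖∑ i ∈ Finset.range n, y (σ i)‖ ≤ M := by
    intro n
    have h := key_bound' hab hF (fun k => p (σ k)) (fun k => q (σ k)) hchσ
      (fun _ => 1) z hz n 1 zero_le_one (fun k _ => by norm_num)
    simp only [one_smul, mul_one] at h; exact h
  -- lower bound
  have hlb : ∀ n : ℕ, (n : ℝ) * (ε/4) ≤ M := by
    intro n
    have hsplit : ∑ i ∈ Finset.range n, y (σ i)
        = (∑ i ∈ Finset.range n, (y (σ i) - v (φ₂ (i + n₀))))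
          + (∑ i ∈ Finset.range n, (v (φ₂ (i + n₀)) - (w : X)))
          + (n : ℝ) • (w : X) := by
      rw [← Finset.sum_add_distrib]
      have : (n : ℝ) • (w : X) = ∑ _i ∈ Finset.range n, (w : X) := by
        rw [Finset.sum_const, Finset.card_range]
        exact Nat.cast_smul_eq_nsmul ℝ n _
      rw [this, ← Finset.sum_add_distrib]
      refine Finset.sum_congr rfl fun i _ => ?_
      abel
    have hA : ‖∑ i ∈ Finset.range n, (y (σ i) - v (φ₂ (i + n₀)))‖ ≤ (n:ℝ) * (ε/4) := by
      calc ‖∑ i ∈ Finset.range n, (y (σ i) - v (φ₂ (i + n₀)))‖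
          ≤ ∑ i ∈ Finset.range n, ‖y (σ i) - v (φ₂ (i + n₀))‖ := norm_sum_le _ _
        _ ≤ ∑ _i ∈ Finset.range n, (ε/4) := Finset.sum_le_sum (fun i _ => hdist1 i)
        _ = (n:ℝ) * (ε/4) := by rw [Finset.sum_const, Finset.card_range]; simp [mul_comm]
    have hB : ‖∑ i ∈ Finset.range n, (v (φ₂ (i + n₀)) - (w : X))‖ ≤ (n:ℝ) * (ε/8) := by
      calc ‖∑ i ∈ Finset.range n, (v (φ₂ (i + n₀)) - (w : X))‖
          ≤ ∑ i ∈ Finset.range n, ‖v (φ₂ (i + n₀)) - (w:X)‖ := norm_sum_le _ _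
        _ ≤ ∑ _i ∈ Finset.range n, (ε/8) := Finset.sum_le_sum (fun i _ => hdist2 i)
        _ = (n:ℝ) * (ε/8) := by rw [Finset.sum_const, Finset.card_range]; simp [mul_comm]
    have hnw : ‖(n : ℝ) • (w : X)‖ = (n:ℝ) * ‖(w:X)‖ := by
      rw [norm_smul, Real.norm_eq_abs, abs_of_nonneg (by positivity : (0:ℝ) ≤ (n:ℝ))]
    have htri : (n:ℝ) * ‖(w:X)‖ ≤ M + ((n:ℝ) * (ε/4) + (n:ℝ) * (ε/8)) := by
      have : (n : ℝ) • (w : X) = (∑ i ∈ Finset.range n, y (σ i))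
          - (∑ i ∈ Finset.range n, (y (σ i) - v (φ₂ (i + n₀))))
          - (∑ i ∈ Finset.range n, (v (φ₂ (i + n₀)) - (w : X))) := by
        rw [hsplit]; abel
      calc (n:ℝ) * ‖(w:X)‖ = ‖(n : ℝ) • (w : X)‖ := hnw.symm
        _ ≤ ‖∑ i ∈ Finset.range n, y (σ i)‖
            + ‖∑ i ∈ Finset.range n, (y (σ i) - v (φ₂ (i + n₀)))‖
            + ‖∑ i ∈ Finset.range n, (v (φ₂ (i + n₀)) - (w : X))‖ := by
              rw [this]
              exact le_trans (norm_sub_le _ _) (by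
                refine add_le_add_left ?_ _
                exact norm_sub_le _ _)
        _ ≤ M + ((n:ℝ) * (ε/4) + (n:ℝ) * (ε/8)) := by
              have := hub n
              linarith
    have hw5 : (n:ℝ) * (5*ε/8) ≤ (n:ℝ) * ‖(w:X)‖ :=
      mul_le_mul_of_nonneg_left hwnorm (by positivity)
    nlinarith
  obtain ⟨n, hn⟩ := exists_nat_gt (M / (ε/4))
  have := hlb n
  rw [div_lt_iff₀ (by linarith : (0:ℝ) < ε/4)] at hn
  linarith
end SV2

private lemma seq_chain {α : Type*} (P : α → Prop) (R : α → α → Prop) (x₀ : α) (h0 : P x₀)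
    (hstep : ∀ x, P x → ∃ y, P y ∧ R x y) :
    ∃ f : ℕ → α, f 0 = x₀ ∧ (∀ n, P (f n)) ∧ ∀ n, R (f n) (f (n+1)) := by
  let g : {x // P x} → {x // P x} :=
    fun x => ⟨(hstep x.1 x.2).choose, (hstep x.1 x.2).choose_spec.1⟩
  let f : ℕ → {x // P x} := fun n => g^[n] ⟨x₀, h0⟩
  have hsucc : ∀ n, f (n+1) = g (f n) := fun n => Function.iterate_succ_apply' g n _
  refine ⟨fun n => (f n).1, rfl, fun n => (f n).2, fun n => ?_⟩
  show R (f n).1 (f (n+1)).1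
  rw [hsucc]
  exact (hstep (f n).1 (f n).2).choose_spec.2

private lemma exists_functional {X : Type*} [NormedAddCommGroup X] [NormedSpace ℝ X]
    (V : Submodule ℝ X) (hVc : IsClosed (V : Set X)) (w : X) (d : ℝ) (hd : 0 < d)
    (hdist : d ≤ Metric.infDist w (V : Set X)) :
    ∃ f : X →L[ℝ] ℝ, ‖f‖ ≤ 1 ∧ d ≤ f w ∧ ∀ v ∈ V, f v = 0 := by
  haveI : IsClosed (V : Set X) := hVc
  have hnorm : ∀ m : X, ‖(Submodule.Quotient.mk m : X ⧸ V)‖ = Metric.infDist m (V : Set X) :=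
    fun m => QuotientAddGroup.norm_mk m
  have hpos : 0 < ‖(Submodule.Quotient.mk w : X ⧸ V)‖ := by
    rw [hnorm]; linarith
  have hne : (Submodule.Quotient.mk w : X ⧸ V) ≠ 0 := by
    intro h; rw [h, norm_zero] at hpos; exact lt_irrefl 0 hpos
  obtain ⟨g, hg1, hgw⟩ := exists_dual_vector ℝ (Submodule.Quotient.mk w : X ⧸ V) (norm_ne_zero_iff.2 hne)
  have hmkle : ∀ m : X, ‖(Submodule.Quotient.mk m : X ⧸ V)‖ ≤ 1 * ‖m‖ := by
    intro m; rw [one_mul]; exact Submodule.Quotient.norm_mk_le V m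
  let mkCLM : X →L[ℝ] (X ⧸ V) := (V.mkQ).mkContinuous 1 hmkle
  have hmknorm : ‖mkCLM‖ ≤ 1 := (V.mkQ).mkContinuous_norm_le zero_le_one hmkle
  refine ⟨g.comp mkCLM, ?_, ?_, ?_⟩
  · calc ‖g.comp mkCLM‖ ≤ ‖g‖ * ‖mkCLM‖ := g.opNorm_comp_le mkCLM
      _ = 1 * ‖mkCLM‖ := by rw [hg1]
      _ ≤ 1 := by rw [one_mul]; exact hmknorm
  · have h1 : g.comp mkCLM w = g (Submodule.Quotient.mk w) := rfl
    rw [h1, hgw, hnorm]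
    exact_mod_cast hdist
  · intro v hv
    have h0 : mkCLM v = 0 := by
      show V.mkQ v = 0
      simp only [Submodule.mkQ_apply]
      exact (Submodule.Quotient.mk_eq_zero V).2 hv
    have : g.comp mkCLM v = g (mkCLM v) := rfl
    rw [this, h0, map_zero]


section Main
variable {X : Type*} [NormedAddCommGroup X] [NormedSpace ℝ X] [CompleteSpace X]
  {a b : ℝ} {F : ℝ → X →L[ℝ] X}

set_option maxHeartbeats 1600000 in
lemma containsC0_of_sep_seq (hab : a < b) (hF : semivar a b F ≠ ⊤)
    (p q : ℕ → ℝ) (hch : ∀ k, a < p k ∧ p k < q k ∧ q k < b ∧ q k < p (k+1))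
    (z : X) (hz : ‖z‖ ≤ 1) (ε : ℝ) (hε : 0 < ε)
    (hy : ∀ k, ε ≤ ‖F (q k) z - F (p k) z‖) :
    ContainsC0Copy X := by
  classical
  set M := (semivar a b F).toReal with hMdef
  have hM0 : (0:ℝ) ≤ M := ENNReal.toReal_nonneg
  set y : ℕ → X := fun k => F (q k) z - F (p k) z with hydef
  -- ### Phase 1: choose a subsequence staying far from spans of previous elements
  set P₁ : ℕ × Finset ℕ → Prop := fun s =>
    (∀ i ∈ s.2, i < s.1) ∧
      ε/4 ≤ Metric.infDist (y s.1) ((Submodule.span ℝ ((s.2.image y : Finset X) : Set X)) : Set X)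
    with hP₁def
  have h0 : P₁ (0, ∅) := by
    constructor
    · intro i hi; simp at hi
    · have h1 : ((∅ : Finset ℕ).image y : Finset X) = ∅ := rfl
      rw [h1]
      have h2 : (((∅ : Finset X) : Set X)) = (∅ : Set X) := by simp
      rw [h2, Submodule.span_empty, Submodule.bot_coe, Metric.infDist_singleton,
        dist_zero_right]
      exact le_trans (by linarith) (hy 0)
  have hstep : ∀ s, P₁ s → ∃ s', P₁ s' ∧ (s'.2 = insert s.1 s.2 ∧ s.1 < s'.1) := by
    rintro ⟨k, S⟩ ⟨hlt, -⟩
    set S' : Finset ℕ := insert k S with hS'def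
    have hfin : FiniteDimensional ℝ
        (Submodule.span ℝ ((S'.image y : Finset X) : Set X)) :=
      FiniteDimensional.span_of_finite ℝ (Finset.finite_toSet _)
    obtain ⟨N, hN⟩ := escape hab hF p q hch z hz ε hε hy _ hfin
    refine ⟨(max N (k+1), S'), ⟨?_, ?_⟩, rfl, by omega⟩
    · intro i hi
      rw [hS'def, Finset.mem_insert] at hi
      rcases hi with rfl | hi
      · omega
      · have := hlt i hi; omega
    · exact hN _ (le_max_left _ _)
  obtain ⟨s, hs0, hsP, hsR⟩ := seq_chain P₁ _ (0, ∅) h0 hstep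
  set κ : ℕ → ℕ := fun j => (s j).1 with hκdef
  have hκmono : StrictMono κ := strictMono_nat_of_lt_succ (fun n => (hsR n).2)
  have hSj : ∀ j, (s j).2 = (Finset.range j).image κ := by
    intro j
    induction j with
    | zero => rw [hs0]; simp
    | succ m ih =>
      rw [(hsR m).1, ih, Finset.range_add_one, Finset.image_insert]
  have hdistV : ∀ j, ε/4 ≤ Metric.infDist (y (κ j))
      ((Submodule.span ℝ ((((Finset.range j).image κ).image y : Finset X) : Set X)) : Set X) := by
    intro j
    have := (hsP j).2
    rwa [hSj j] at this
  -- ### Phase 2: norming functionals vanishing on previous spans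
  have hfun : ∀ j, ∃ f : X →L[ℝ] ℝ, ‖f‖ ≤ 1 ∧ ε/4 ≤ f (y (κ j)) ∧
      ∀ v ∈ Submodule.span ℝ ((((Finset.range j).image κ).image y : Finset X) : Set X), f v = 0 := by
    intro j
    have hfin : FiniteDimensional ℝ
        (Submodule.span ℝ ((((Finset.range j).image κ).image y : Finset X) : Set X)) :=
      FiniteDimensional.span_of_finite ℝ (Finset.finite_toSet _)
    have hclosed : IsClosed ((Submodule.span ℝ
        ((((Finset.range j).image κ).image y : Finset X) : Set X)) : Set X) :=
      Submodule.closed_of_finiteDimensional _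
    exact exists_functional _ hclosed _ (ε/4) (by linarith) (hdistV j)
  choose f hf1 hf2 hf3 using hfun
  have hf0 : ∀ i j, i < j → f j (y (κ i)) = 0 := by
    intro i j hij
    refine hf3 j _ (Submodule.subset_span ?_)
    rw [Finset.coe_image]
    refine Set.mem_image_of_mem y ?_
    rw [Finset.coe_image]
    exact Set.mem_image_of_mem κ (by simp [hij])
  -- ### Phase 3: thin out so that rows decay geometrically
  set P₃ : ℕ × Finset ℕ → Prop := fun s =>
    (∀ i ∈ s.2, i < s.1) ∧ ∀ i ∈ s.2, |f i (y (κ s.1))| ≤ ε * (1/2)^(s.2.card + 4)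
    with hP₃def
  have h0₃ : P₃ (0, ∅) := by
    constructor <;> (intro i hi; simp at hi)
  have hstep₃ : ∀ s, P₃ s → ∃ s', P₃ s' ∧ (s'.2 = insert s.1 s.2 ∧ s.1 < s'.1) := by
    rintro ⟨m, S⟩ ⟨hlt, -⟩
    set S' : Finset ℕ := insert m S with hS'def
    set δ : ℝ := ε * (1/2)^(S'.card + 4) with hδdef
    have hδpos : 0 < δ := by positivity
    have hrow : ∀ i : ℕ, ∃ N, ∀ r ≥ N, i ∈ S' → |f i (y r)| ≤ δ := by
      intro i
      by_cases hi : i ∈ S'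
      · have htend := row_summable hab hF p q hch z hz (f i) (hf1 i)
        have hev : ∀ᶠ r in atTop, |f i (y r)| < δ :=
          htend.eventually_lt_const hδpos
        rw [Filter.eventually_atTop] at hev
        obtain ⟨N, hN⟩ := hev
        exact ⟨N, fun r hr _ => (hN r hr).le⟩
      · exact ⟨0, fun r _ hmem => absurd hmem hi⟩
    choose Nf hNf using hrow
    set N : ℕ := S'.sup Nf with hNdef
    refine ⟨(max N (m+1), S'), ⟨?_, ?_⟩, rfl, by omega⟩
    · intro i hi
      rw [hS'def, Finset.mem_insert] at hi
      rcases hi with rfl | hi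
      · omega
      · have := hlt i hi; omega
    · intro i hi
      refine hNf i (κ (max N (m+1))) ?_ hi
      calc Nf i ≤ N := Finset.le_sup hi
        _ ≤ max N (m+1) := le_max_left _ _
        _ ≤ κ (max N (m+1)) := hκmono.le_apply
  obtain ⟨sm, hm0, hmP, hmR⟩ := seq_chain P₃ _ (0, ∅) h0₃ hstep₃
  set μ : ℕ → ℕ := fun j => (sm j).1 with hμdef
  have hμmono : StrictMono μ := strictMono_nat_of_lt_succ (fun n => (hmR n).2)
  have hTj : ∀ j, (sm j).2 = (Finset.range j).image μ := by
    intro j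
    induction j with
    | zero => rw [hm0]; simp
    | succ m ih =>
      rw [(hmR m).1, ih, Finset.range_add_one, Finset.image_insert]
  have hcard : ∀ j, ((sm j).2).card = j := by
    intro j
    rw [hTj j, Finset.card_image_of_injective _ hμmono.injective, Finset.card_range]
  -- ### final data
  set K : ℕ → ℕ := fun j => κ (μ j) with hKdef
  have hKmono : StrictMono K := hκmono.comp hμmono
  set Y : ℕ → X := fun j => y (K j) with hYdef
  set G : ℕ → (X →L[ℝ] ℝ) := fun j => f (μ j) with hGdef
  have hG1 : ∀ j, ‖G j‖ ≤ 1 := fun j => hf1 (μ j)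
  have hG2 : ∀ j, ε/4 ≤ G j (Y j) := fun j => hf2 (μ j)
  have hG3 : ∀ i j, i < j → G j (Y i) = 0 := fun i j hij => hf0 (μ i) (μ j) (hμmono hij)
  have hG4 : ∀ i j, i < j → |G i (Y j)| ≤ ε * (1/2)^(j + 4) := by
    intro i j hij
    have := (hmP j).2 (μ i) (by rw [hTj j]; exact Finset.mem_image_of_mem μ (by simp [hij]))
    rwa [hcard j] at this
  have hYε : ∀ j, ε ≤ ‖Y j‖ := fun j => hy (K j)
  have hchK : ∀ k, a < p (K k) ∧ p (K k) < q (K k) ∧ q (K k) < b ∧ q (K k) < p (K (k+1)) := by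
    intro k
    exact ⟨(hch (K k)).1, (hch (K k)).2.1, (hch (K k)).2.2.1,
      chain_lt p q hch (K k) (K (k+1)) (hKmono (by omega))⟩
  have hKey : ∀ (c : ℕ → ℝ) (n : ℕ) (r : ℝ), 0 ≤ r → (∀ k < n, |c k| ≤ r) →
      ‖∑ k ∈ Finset.range n, c k • Y k‖ ≤ M * r := by
    intro c n r hr hc
    exact key_bound' hab hF (fun k => p (K k)) (fun k => q (K k)) hchK c z hz n r hr hc
  -- coordinate bound for C₀ functions
  have hcoord : ∀ (u : C₀(ℕ, ℝ)) (j : ℕ), |u j| ≤ ‖u‖ := by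
    intro u j
    have h1 : ‖u.toBCF‖ = ‖u‖ := ZeroAtInftyContinuousMap.norm_toBCF_eq_norm
    have h2 := BoundedContinuousFunction.norm_coe_le_norm u.toBCF j
    rw [h1] at h2
    simpa [Real.norm_eq_abs] using h2
  have htail : ∀ u : C₀(ℕ, ℝ), Tendsto (fun j : ℕ => u j) atTop (𝓝 0) := by
    intro u
    have := zero_at_infty u
    rwa [cocompact_eq_cofinite, Nat.cofinite_eq_atTop] at this
  -- partial sums
  set S : ℕ → C₀(ℕ, ℝ) → X := fun n u => ∑ j ∈ Finset.range n, u j • Y j with hSdef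
  have hSapp : ∀ (n : ℕ) (u : C₀(ℕ, ℝ)), S n u = ∑ j ∈ Finset.range n, u j • Y j :=
    fun n u => rfl
  have hdiff : ∀ (u : C₀(ℕ, ℝ)) (r : ℝ) (N : ℕ), 0 ≤ r → (∀ j ≥ N, |u j| ≤ r) →
      ∀ n m, N ≤ n → n ≤ m → ‖S m u - S n u‖ ≤ M * r := by
    intro u r N hr hur n m hNn hnm
    set c : ℕ → ℝ := fun k => if n ≤ k then u k else 0 with hcdef
    have hcapp : ∀ k, c k = if n ≤ k then u k else 0 := fun k => rfl
    have hsub := Finset.sum_subset (f := fun k => (if k < n then u k else 0) • Y k)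
      (Finset.range_subset_range.2 hnm)
      (by
        intro x _ hxn
        rw [Finset.mem_range, not_lt] at hxn
        show (if x < n then u x else 0) • Y x = 0
        rw [if_neg (by omega), zero_smul])
    have h1 : ∑ k ∈ Finset.range m, (if k < n then u k else 0) • Y k = S n u := by
      rw [← hsub, hSapp]
      refine Finset.sum_congr rfl (fun k hk => ?_)
      rw [Finset.mem_range] at hk
      rw [if_pos hk]
    have heq : ∑ k ∈ Finset.range m, c k • Y k = S m u - S n u := by
      have h2 : ∀ k ∈ Finset.range m,
          c k • Y k = u k • Y k - (if k < n then u k else 0) • Y k := by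
        intro k _
        rw [hcapp]
        by_cases hk : n ≤ k
        · rw [if_pos hk, if_neg (by omega), zero_smul, sub_zero]
        · rw [if_neg hk, if_pos (by omega), zero_smul, sub_self]
      rw [Finset.sum_congr rfl h2, Finset.sum_sub_distrib, h1, hSapp]
    have hc : ∀ k < m, |c k| ≤ r := by
      intro k _
      rw [hcapp]
      by_cases hk : n ≤ k
      · rw [if_pos hk]; exact hur k (by omega)
      · rw [if_neg hk]; simpa using hr
    rw [← heq]
    exact hKey c m r hr hc
  -- Cauchy sequences of partial sums, define ψ₀ as the limit
  have hcauchy : ∀ u : C₀(ℕ, ℝ), CauchySeq (fun n => S n u) := by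
    intro u
    rw [Metric.cauchySeq_iff]
    intro η hη
    have hMpos : (0:ℝ) < 2 * (M + 1) := by linarith
    have habs0 : Tendsto (fun j : ℕ => |u j|) atTop (𝓝 (0:ℝ)) := by
      have h := (htail u).abs
      rwa [abs_zero] at h
    have hev : ∀ᶠ j in atTop, |u j| < η / (2 * (M + 1)) :=
      habs0.eventually_lt_const (div_pos hη hMpos)
    rw [Filter.eventually_atTop] at hev
    obtain ⟨N, hN⟩ := hev
    refine ⟨N, fun m hm n hn => ?_⟩
    have hbound : ∀ n' m', N ≤ n' → n' ≤ m' → dist (S m' u) (S n' u) < η := by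
      intro n' m' h1 h2
      rw [dist_eq_norm]
      have := hdiff u (η / (2 * (M + 1))) N (div_pos hη hMpos).le
        (fun j hj => (hN j hj).le) n' m' h1 h2
      calc ‖S m' u - S n' u‖ ≤ M * (η / (2 * (M + 1))) := this
        _ < η := by
            rw [div_eq_inv_mul, ← mul_assoc]
            have h3 : M * (2 * (M + 1))⁻¹ < 1 := by
              rw [mul_inv_lt_iff₀ hMpos]
              nlinarith
            nlinarith
    rcases le_total n m with h | h
    · exact hbound n m hn h
    · rw [dist_comm]; exact hbound m n hm h
  have hLex : ∀ u : C₀(ℕ, ℝ), ∃ L, Tendsto (fun n => S n u) atTop (𝓝 L) :=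
    fun u => cauchySeq_tendsto_of_complete (hcauchy u)
  choose ψ₀ hψ₀ using hLex
  -- linearity
  have hadd : ∀ u v : C₀(ℕ, ℝ), ψ₀ (u + v) = ψ₀ u + ψ₀ v := by
    intro u v
    refine tendsto_nhds_unique (hψ₀ (u + v)) ?_
    have h1 : (fun n => S n u + S n v) = (fun n => S n (u + v)) := by
      funext n
      rw [hSapp, hSapp, hSapp, ← Finset.sum_add_distrib]
      refine Finset.sum_congr rfl (fun j _ => ?_)
      have : (u + v) j = u j + v j := by simp
      rw [this, add_smul]
    rw [← h1]
    exact (hψ₀ u).add (hψ₀ v)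
  have hsmul : ∀ (t : ℝ) (u : C₀(ℕ, ℝ)), ψ₀ (t • u) = t • ψ₀ u := by
    intro t u
    refine tendsto_nhds_unique (hψ₀ (t • u)) ?_
    have h1 : (fun n => t • S n u) = (fun n => S n (t • u)) := by
      funext n
      rw [hSapp, hSapp, Finset.smul_sum]
      refine Finset.sum_congr rfl (fun j _ => ?_)
      have : (t • u) j = t * u j := by simp
      rw [this, smul_smul]
    rw [← h1]
    exact (hψ₀ u).const_smul t
  have hupper : ∀ u : C₀(ℕ, ℝ), ‖ψ₀ u‖ ≤ M * ‖u‖ := by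
    intro u
    refine le_of_tendsto' (hψ₀ u).norm (fun n => ?_)
    exact hKey (fun j => u j) n ‖u‖ (norm_nonneg u) (fun j _ => hcoord u j)
  -- lower bound
  have hψval : ∀ u : C₀(ℕ, ℝ), ∀ j₀ : ℕ,
      Tendsto (fun n => G j₀ (S n u)) atTop (𝓝 (G j₀ (ψ₀ u))) :=
    fun u j₀ => (((G j₀).continuous.tendsto _).comp (hψ₀ u))
  have hlower : ∀ u : C₀(ℕ, ℝ), ε/8 * ‖u‖ ≤ ‖ψ₀ u‖ := by
    intro u
    rcases eq_or_ne u 0 with rfl | hu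
    · have hz0 : ψ₀ 0 = 0 := by
        refine tendsto_nhds_unique (hψ₀ 0) ?_
        have h1 : (fun n : ℕ => S n 0) = (fun _ => (0 : X)) := by
          funext n
          rw [hSapp]
          simp
        rw [h1]
        exact tendsto_const_nhds
      rw [hz0]
      simp
    · have hupos : 0 < ‖u‖ := norm_pos_iff.2 hu
      -- the sup norm is attained
      obtain ⟨j₀, hj₀⟩ : ∃ j₀, ‖u‖ ≤ |u j₀| := by
        by_contra hno
        push_neg at hno
        have habs0 : Tendsto (fun j : ℕ => |u j|) atTop (𝓝 (0:ℝ)) := by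
          have h := (htail u).abs
          rwa [abs_zero] at h
        have hev : ∀ᶠ j in atTop, |u j| < ‖u‖ / 2 :=
          habs0.eventually_lt_const (by linarith)
        rw [Filter.eventually_atTop] at hev
        obtain ⟨N, hN⟩ := hev
        have hne : (Finset.range (N+1)).Nonempty := ⟨0, by simp⟩
        set A : ℝ := (Finset.range (N+1)).sup' hne (fun j => |u j|) with hAdef
        have hAlt : A < ‖u‖ := by
          rw [hAdef, Finset.sup'_lt_iff]
          exact fun j _ => hno j
        have hbig : ∀ j, |u j| ≤ max A (‖u‖/2) := by
          intro j
          rcases le_or_gt j N with h | h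
          · refine le_trans ?_ (le_max_left A (‖u‖/2))
            rw [hAdef]
            exact Finset.le_sup' (fun j => |u j|) (Finset.mem_range.2 (show j < N+1 by omega))
          · exact le_trans (hN j (by omega)).le (le_max_right _ _)
        have : ‖u‖ ≤ max A (‖u‖/2) := by
          rw [← ZeroAtInftyContinuousMap.norm_toBCF_eq_norm]
          refine (BoundedContinuousFunction.norm_le ?_).2
            (fun j => by simpa [Real.norm_eq_abs] using hbig j)
          exact le_trans (abs_nonneg (u 0)) (hbig 0)
        have : max A (‖u‖/2) < ‖u‖ := max_lt hAlt (by linarith)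
        linarith
      -- estimate G j₀ on partial sums
      have hest : ∀ n, j₀ + 1 ≤ n → ε/8 * ‖u‖ ≤ |G j₀ (S n u)| := by
        intro n hn
        have hj₀n : j₀ ∈ Finset.range n := by simp; omega
        have hrepr : G j₀ (S n u) = u j₀ * G j₀ (Y j₀)
            + ∑ k ∈ (Finset.range n).erase j₀, u k * G j₀ (Y k) := by
          rw [hSapp, map_sum]
          have h2 : ∀ k ∈ Finset.range n, G j₀ (u k • Y k) = u k * G j₀ (Y k) := by
            intro k _
            rw [map_smul, smul_eq_mul]
          rw [Finset.sum_congr rfl h2]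
          exact (Finset.add_sum_erase _ _ hj₀n).symm
        have htermb : ∀ k ∈ (Finset.range n).erase j₀,
            |u k * G j₀ (Y k)| ≤ ‖u‖ * (ε * (1/2)^(k+4)) := by
          intro k hk
          have hkne : k ≠ j₀ := (Finset.mem_erase.1 hk).1
          rcases lt_or_gt_of_ne hkne with h | h
          · rw [hG3 k j₀ h, mul_zero, abs_zero]
            positivity
          · rw [abs_mul]
            exact mul_le_mul (hcoord u k) (hG4 j₀ k h) (abs_nonneg _) (norm_nonneg u)
        have hsumb : |∑ k ∈ (Finset.range n).erase j₀, u k * G j₀ (Y k)|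
            ≤ ‖u‖ * (ε/8) := by
          calc |∑ k ∈ (Finset.range n).erase j₀, u k * G j₀ (Y k)|
              ≤ ∑ k ∈ (Finset.range n).erase j₀, |u k * G j₀ (Y k)| :=
                Finset.abs_sum_le_sum_abs _ _
            _ ≤ ∑ k ∈ (Finset.range n).erase j₀, ‖u‖ * (ε * (1/2)^(k+4)) :=
                Finset.sum_le_sum htermb
            _ ≤ ∑ k ∈ Finset.range n, ‖u‖ * (ε * (1/2)^(k+4)) := by
                refine Finset.sum_le_sum_of_subset_of_nonneg (Finset.erase_subset _ _) ?_
                intro k _ _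
                positivity
            _ = ‖u‖ * ε * (1/2)^4 * ∑ k ∈ Finset.range n, (1/2 : ℝ)^k := by
                rw [Finset.mul_sum]
                refine Finset.sum_congr rfl (fun k _ => ?_)
                rw [pow_add]
                ring
            _ ≤ ‖u‖ * ε * (1/2)^4 * 2 := by
                refine mul_le_mul_of_nonneg_left (sum_geometric_two_le n) ?_
                positivity
            _ = ‖u‖ * (ε/8) := by
                have h16 : ((1:ℝ)/2)^4 = 1/16 := by norm_num
                rw [h16]
                ring
        have hmain : ‖u‖ * (ε/4) ≤ |u j₀ * G j₀ (Y j₀)| := by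
          rw [abs_mul]
          have h5 : ε/4 ≤ |G j₀ (Y j₀)| := le_trans (hG2 j₀) (le_abs_self _)
          exact mul_le_mul hj₀ h5 (by linarith) (abs_nonneg _)
        have htri : |u j₀ * G j₀ (Y j₀)| - |∑ k ∈ (Finset.range n).erase j₀, u k * G j₀ (Y k)|
            ≤ |G j₀ (S n u)| := by
          rw [hrepr]
          have := abs_add_le (u j₀ * G j₀ (Y j₀) + ∑ k ∈ (Finset.range n).erase j₀, u k * G j₀ (Y k))
            (- ∑ k ∈ (Finset.range n).erase j₀, u k * G j₀ (Y k))
          simp only [add_neg_cancel_right, abs_neg] at this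
          linarith
        calc ε/8 * ‖u‖ = ‖u‖ * (ε/4) - ‖u‖ * (ε/8) := by ring
          _ ≤ |u j₀ * G j₀ (Y j₀)| - |∑ k ∈ (Finset.range n).erase j₀, u k * G j₀ (Y k)| := by
              have := hsumb; have := hmain; linarith
          _ ≤ |G j₀ (S n u)| := htri
      have hlim : ε/8 * ‖u‖ ≤ |G j₀ (ψ₀ u)| := by
        refine ge_of_tendsto ((hψval u j₀).abs) ?_
        rw [Filter.eventually_atTop]
        exact ⟨j₀ + 1, fun n hn => hest n hn⟩
      have hfinal : |G j₀ (ψ₀ u)| ≤ ‖ψ₀ u‖ := by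
        have h6 := (G j₀).le_opNorm (ψ₀ u)
        rw [Real.norm_eq_abs] at h6
        calc |G j₀ (ψ₀ u)| ≤ ‖G j₀‖ * ‖ψ₀ u‖ := h6
          _ ≤ 1 * ‖ψ₀ u‖ := mul_le_mul_of_nonneg_right (hG1 j₀) (norm_nonneg _)
          _ = ‖ψ₀ u‖ := one_mul _
      linarith
  -- assemble the continuous linear map
  set ψlin : C₀(ℕ, ℝ) →ₗ[ℝ] X :=
    { toFun := ψ₀, map_add' := hadd, map_smul' := hsmul } with hψlindef
  set ψ : C₀(ℕ, ℝ) →L[ℝ] X := ψlin.mkContinuous M hupper with hψdef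
  refine ⟨ψ, ε/8, M + 1, by linarith, by linarith, fun u => ?_⟩
  have hψu : ψ u = ψ₀ u := rfl
  rw [hψu]
  constructor
  · exact hlower u
  · calc ‖ψ₀ u‖ ≤ M * ‖u‖ := hupper u
      _ ≤ (M + 1) * ‖u‖ := by nlinarith [norm_nonneg u]

lemma left_limit (hX : ¬ ContainsC0Copy X) (hab : a < b) (hF : semivar a b F < ⊤)
    (x : X) (t : ℝ) (ht : t ∈ Set.Ioc a b) :
    ∃ L : X, Filter.Tendsto (fun s => F s x) (𝓝[Set.Ico a t] t) (𝓝 L) := by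
  classical
  obtain ⟨hat, htb⟩ := ht
  have hFne : semivar a b F ≠ ⊤ := ne_of_lt hF
  -- normalize x
  set C : ℝ := max 1 ‖x‖ with hCdef
  have hC1 : (1:ℝ) ≤ C := le_max_left _ _
  have hC0 : (0:ℝ) < C := by linarith
  set z : X := C⁻¹ • x with hzdef
  have hz : ‖z‖ ≤ 1 := by
    rw [hzdef, norm_smul, Real.norm_eq_abs, abs_of_pos (inv_pos.2 hC0)]
    rw [inv_mul_le_iff₀ hC0, mul_one]
    exact le_max_right _ _
  have hxz : ∀ s : ℝ, F s x = C • F s z := by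
    intro s
    rw [hzdef, map_smul, smul_smul, mul_inv_cancel₀ (ne_of_gt hC0), one_smul]
  suffices h : ∃ L, Filter.Tendsto (fun s => F s z) (𝓝[Set.Ico a t] t) (𝓝 L) by
    obtain ⟨L, hL⟩ := h
    refine ⟨C • L, ?_⟩
    have : (fun s => F s x) = (fun s => C • F s z) := funext hxz
    rw [this]
    exact hL.const_smul C
  by_contra hno
  push_neg at hno
  set g : ℝ → X := fun s => F s z with hgdef
  haveI hNB : (𝓝[Set.Ico a t] t).NeBot := by
    rw [nhdsWithin_Ico_eq_nhdsLT hat]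
    infer_instance
  have hnc : ¬ Cauchy (Filter.map g (𝓝[Set.Ico a t] t)) := by
    intro hc
    obtain ⟨L, hL⟩ := cauchy_map_iff_exists_tendsto.1 hc
    exact hno L hL
  rw [Metric.cauchy_iff] at hnc
  push_neg at hnc
  obtain ⟨ε, hε, hεsep⟩ := hnc (Filter.map_neBot)
  -- pair extraction
  have pairEx : ∀ r : ℝ, a ≤ r → r < t → ∃ pq : ℝ × ℝ,
      r < pq.1 ∧ pq.1 < pq.2 ∧ pq.2 < t ∧ ε ≤ ‖g pq.2 - g pq.1‖ := by
    intro r har hrt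
    have hw : Set.Ioo r t ∈ 𝓝[Set.Ico a t] t := by
      refine mem_nhdsWithin.2 ⟨Set.Ioi r, isOpen_Ioi, hrt, ?_⟩
      rintro u ⟨h1, h2⟩
      exact ⟨h1, h2.2⟩
    have hgw : g '' (Set.Ioo r t) ∈ Filter.map g (𝓝[Set.Ico a t] t) :=
      Filter.image_mem_map hw
    obtain ⟨x', hx', y', hy', hdist⟩ := hεsep _ hgw
    obtain ⟨u, hu, rfl⟩ := hx'
    obtain ⟨v, hv, rfl⟩ := hy'
    rcases lt_trichotomy u v with h | h | h
    · refine ⟨(u, v), hu.1, h, hv.2, ?_⟩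
      rw [← dist_eq_norm, dist_comm]
      exact hdist
    · exfalso; rw [h] at hdist; simp at hdist; linarith
    · refine ⟨(v, u), hv.1, h, hu.2, ?_⟩
      rw [← dist_eq_norm]
      exact hdist
  -- build the chain of pairs
  set P : ℝ × ℝ → Prop := fun pq => a < pq.1 ∧ pq.1 < pq.2 ∧ pq.2 < t ∧ ε ≤ ‖g pq.2 - g pq.1‖
    with hPdef
  obtain ⟨pq₀, h₀1, h₀2, h₀3, h₀4⟩ := pairEx a le_rfl hat
  have h0P : P pq₀ := ⟨h₀1, h₀2, h₀3, h₀4⟩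
  have hstepP : ∀ pq, P pq → ∃ pq', P pq' ∧ pq.2 < pq'.1 := by
    rintro pq ⟨hp1, hp2, hp3, -⟩
    obtain ⟨pq', k1, k2, k3, k4⟩ := pairEx pq.2 (by linarith) hp3
    exact ⟨pq', ⟨by linarith, k2, k3, k4⟩, k1⟩
  obtain ⟨pqs, -, hPall, hRall⟩ := seq_chain P (fun pq pq' => pq.2 < pq'.1) pq₀ h0P hstepP
  set p : ℕ → ℝ := fun k => (pqs k).1 with hpdef
  set q : ℕ → ℝ := fun k => (pqs k).2 with hqdef
  have hch : ∀ k, a < p k ∧ p k < q k ∧ q k < b ∧ q k < p (k+1) := by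
    intro k
    exact ⟨(hPall k).1, (hPall k).2.1, lt_of_lt_of_le (hPall k).2.2.1 htb, hRall k⟩
  have hsep : ∀ k, ε ≤ ‖F (q k) z - F (p k) z‖ := fun k => (hPall k).2.2.2
  exact hX (containsC0_of_sep_seq hab hFne p q hch z hz ε hε hsep)
lemma refl_semivar (hab : a < b) :
    semivar a b (fun s => F (a + b - s)) ≤ semivar a b F := by
  refine iSup_le fun n => iSup_le fun α => iSup_le fun hα => iSup_le fun x => iSup_le fun hx => ?_
  set α' : ℕ → ℝ := fun j => a + b - α (n - j) with hα'def
  set x' : ℕ → X := fun j => - x (n - 1 - j) with hx'def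
  have hα' : IsDivision a b n α' := by
    obtain ⟨ha0, han, hmono⟩ := hα
    refine ⟨?_, ?_, ?_⟩
    · simp only [hα'def, Nat.sub_zero, han]; ring
    · simp only [hα'def, Nat.sub_self, ha0]; ring
    · intro i hi
      simp only [hα'def]
      have h1 : n - (i+1) < n := by omega
      have := hmono (n - (i+1)) h1
      rw [show n - (i+1) + 1 = n - i by omega] at this
      linarith
  have hx' : ∀ j, ‖x' j‖ ≤ 1 := by
    intro j
    simp only [hx'def, norm_neg]
    exact hx _
  have hsum : ∑ j ∈ Finset.range n, (F (α' (j + 1)) - F (α' j)) (x' j)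
      = ∑ j ∈ Finset.range n, ((fun s => F (a + b - s)) (α (j + 1))
          - (fun s => F (a + b - s)) (α j)) (x j) := by
    rw [← Finset.sum_range_reflect
      (fun j => ((fun s => F (a + b - s)) (α (j + 1)) - (fun s => F (a + b - s)) (α j)) (x j)) n]
    refine Finset.sum_congr rfl fun j hj => ?_
    rw [Finset.mem_range] at hj
    have e1 : α' (j + 1) = a + b - α (n - 1 - j) := by
      simp only [hα'def]
      congr 2
      omega
    have e2 : α' j = a + b - α (n - 1 - j + 1) := by
      simp only [hα'def]
      congr 2
      omega
    rw [e1, e2]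
    simp only [hx'def, ContinuousLinearMap.sub_apply, map_neg]
    abel
  calc ENNReal.ofReal ‖∑ j ∈ Finset.range n, ((fun s => F (a + b - s)) (α (j + 1))
          - (fun s => F (a + b - s)) (α j)) (x j)‖
      = ENNReal.ofReal ‖∑ j ∈ Finset.range n, (F (α' (j + 1)) - F (α' j)) (x' j)‖ := by
        rw [hsum]
    _ ≤ semivar a b F :=
        le_iSup_of_le n (le_iSup_of_le α' (le_iSup_of_le hα' (le_iSup_of_le x'
          (le_iSup_of_le hx' le_rfl))))

lemma right_limit (hX : ¬ ContainsC0Copy X) (hab : a < b) (hF : semivar a b F < ⊤)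
    (x : X) (t : ℝ) (ht : t ∈ Set.Ico a b) :
    ∃ L : X, Filter.Tendsto (fun s => F s x) (𝓝[Set.Ioc t b] t) (𝓝 L) := by
  obtain ⟨hat, htb⟩ := ht
  set G : ℝ → X →L[ℝ] X := fun s => F (a + b - s) with hGdef
  have hG : semivar a b G < ⊤ := lt_of_le_of_lt (refl_semivar hab) hF
  set t' : ℝ := a + b - t with ht'def
  have ht' : t' ∈ Set.Ioc a b := ⟨by simp only [ht'def]; linarith, by simp only [ht'def]; linarith⟩
  obtain ⟨L, hL⟩ := left_limit (F := G) hX hab hG x t' ht'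
  refine ⟨L, ?_⟩
  set r : ℝ → ℝ := fun s => a + b - s with hrdef
  have hr : Filter.Tendsto r (𝓝[Set.Ioc t b] t) (𝓝[Set.Ico a t'] t') := by
    have hcont : ContinuousWithinAt r (Set.Ioc t b) t :=
      ((continuous_const.sub continuous_id).continuousWithinAt)
    have hmaps : Set.MapsTo r (Set.Ioc t b) (Set.Ico a t') := by
      rintro s ⟨h1, h2⟩
      exact ⟨by simp only [hrdef, ht'def]; linarith, by simp only [hrdef, ht'def]; linarith⟩
    have := hcont.tendsto_nhdsWithin hmaps
    have hrt : r t = t' := by simp only [hrdef, ht'def]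
    rwa [hrt] at this
  have hcomp := hL.comp hr
  have : ((fun s => G s x) ∘ r) = (fun s => F s x) := by
    funext s
    simp only [Function.comp_apply, hGdef, hrdef]
    congr 1
    ring
  rwa [this] at hcomp

theorem simplyRegulated_of_not_containsC0'
    (hX : ¬ ContainsC0Copy X)
    (hab : a < b) (hF : semivar a b F < ⊤) :
    ∀ x : X,
      (∀ t ∈ Set.Ioc a b, ∃ L : X,
        Filter.Tendsto (fun s => F s x) (𝓝[Set.Ico a t] t) (𝓝 L)) ∧
      (∀ t ∈ Set.Ico a b, ∃ L : X,
        Filter.Tendsto (fun s => F s x) (𝓝[Set.Ioc t b] t) (𝓝 L)) := by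
  intro x
  exact ⟨fun t ht => left_limit hX hab hF x t ht,
    fun t ht => right_limit hX hab hF x t ht⟩

end Main


/-- if the Banach space `X` does not contain an isomorphic copy of `c₀`, then
every `F : [a,b] → L(X)` of bounded semivariation is simply regulated: for each `x ∈ X` the
function `t ↦ F(t)x` has one-sided limits at every point of `[a,b]`. -/
theorem simplyRegulated_of_not_containsC0
    {X : Type*} [NormedAddCommGroup X] [NormedSpace ℝ X] [CompleteSpace X]
    (hX : ¬ ContainsC0Copy X)
    (a b : ℝ) (hab : a < b) (F : ℝ → X →L[ℝ] X) (hF : semivar a b F < ⊤) :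
    ∀ x : X,
      (∀ t ∈ Set.Ioc a b, ∃ L : X,
        Filter.Tendsto (fun s => F s x) (𝓝[Set.Ico a t] t) (𝓝 L)) ∧
      (∀ t ∈ Set.Ico a b, ∃ L : X,
        Filter.Tendsto (fun s => F s x) (𝓝[Set.Ioc t b] t) (𝓝 L)) := by
  exact simplyRegulated_of_not_containsC0' hX hab hF
end

section
/- Let X be a real Banach space that contains an isomorphic copy of c₀. Then there exists a function F : [a,b] → L(X) of bounded semivariation on [a,b] that is not simply regulated; equivalently, if every function F : [a,b] → L(X) of bounded semivariation is simply regulated, then X does not contain an isomorphic copy of c₀. -/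
open Filter Topology

open ZeroAtInfty

/-! ### Auxiliary constructions -/

/-- The standard basis vectors of `c₀`. -/
noncomputable def c0e (k : ℕ) : C₀(ℕ, ℝ) :=
  ⟨⟨fun n => if n = k then 1 else 0, continuous_of_discreteTopology⟩, by
    have h : ∀ᶠ n in atTop, (if n = k then (1:ℝ) else 0) = 0 :=
      eventually_atTop.2 ⟨k+1, fun n hn => if_neg (by omega)⟩
    rw [cocompact_eq_atTop]
    exact Tendsto.congr' (h.mono fun n hh => hh.symm) tendsto_const_nhds⟩

@[simp] lemma c0e_apply (k n : ℕ) : c0e k n = if n = k then 1 else 0 := rfl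

lemma c0norm_le (u : C₀(ℕ,ℝ)) (M : ℝ) (hM : 0 ≤ M) (h : ∀ n, |u n| ≤ M) : ‖u‖ ≤ M := by
  rw [← ZeroAtInftyContinuousMap.norm_toBCF_eq_norm]
  exact BoundedContinuousFunction.norm_le hM |>.2 h

lemma c0apply_le (u : C₀(ℕ,ℝ)) (n : ℕ) : |u n| ≤ ‖u‖ := by
  rw [← ZeroAtInftyContinuousMap.norm_toBCF_eq_norm]
  exact u.toBCF.norm_coe_le_norm n

lemma c0e_norm (k : ℕ) : ‖c0e k‖ = 1 := by
  refine le_antisymm (c0norm_le _ 1 one_pos.le fun n => ?_) ?_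
  · simp only [c0e_apply]; split <;> simp
  · have := c0apply_le (c0e k) k
    simpa using this

/-- The sequence of points `t_k ↑ b`. -/
noncomputable def ttt (a b : ℝ) (k : ℕ) : ℝ := b - (b - a) / (k + 2)

lemma ttt_strictMono {a b : ℝ} (hab : a < b) : StrictMono (ttt a b) := by
  intro i j hij
  have hba : 0 < b - a := by linarith
  unfold ttt
  have h2 : (0:ℝ) < i + 2 := by positivity
  have h3 : (i:ℝ) + 2 < j + 2 := by exact_mod_cast by push_cast; omega
  have := div_lt_div_of_pos_left hba h2 h3
  linarith [this]

lemma ttt_mem {a b : ℝ} (hab : a < b) (k : ℕ) : ttt a b k ∈ Set.Ico a b := by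
  have hba : 0 < b - a := by linarith
  have h2 : (1:ℝ) < k + 2 := by
    have : (0:ℝ) ≤ (k:ℝ) := Nat.cast_nonneg k
    linarith
  constructor
  · have : (b - a) / (k + 2) < (b - a) := by
      rw [div_lt_iff₀ (by positivity)]
      nlinarith
    unfold ttt; linarith
  · unfold ttt
    have : 0 < (b - a) / (k + 2) := by positivity
    linarith

lemma ttt_tendsto {a b : ℝ} (hab : a < b) : Tendsto (ttt a b) atTop (𝓝 b) := by
  have h : Tendsto (fun k : ℕ => (b - a) / (k + 2)) atTop (𝓝 0) := by
    apply Tendsto.div_atTop tendsto_const_nhds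
    exact tendsto_atTop_add_const_right _ 2 tendsto_natCast_atTop_atTop
  have := tendsto_const_nhds (x := b) (f := atTop (α := ℕ)) |>.sub h
  simp at this; exact this

lemma ttt_inj {a b : ℝ} (hab : a < b) : Function.Injective (ttt a b) :=
  (ttt_strictMono hab).injective

open Classical in
/-- The `c₀`-valued step-like function. -/
noncomputable def ggg (a b : ℝ) (s : ℝ) : C₀(ℕ, ℝ) :=
  if h : ∃ k, ttt a b k = s then c0e h.choose else 0

lemma ggg_apply {a b : ℝ} (hab : a < b) (s : ℝ) (m : ℕ) :
    ggg a b s m = if ttt a b m = s then 1 else 0 := by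
  classical
  unfold ggg
  by_cases h : ∃ k, ttt a b k = s
  · rw [dif_pos h]
    have hs := h.choose_spec
    simp only [c0e_apply]
    by_cases hm : m = h.choose
    · subst hm; simp [hs]
    · have hne : ttt a b m ≠ s := fun he => hm (ttt_inj hab (he.trans hs.symm))
      simp [hm, hne]
  · rw [dif_neg h]
    have hne : ttt a b m ≠ s := fun he => h ⟨m, he⟩
    simp [hne]

lemma ggg_ttt {a b : ℝ} (hab : a < b) (k : ℕ) : ggg a b (ttt a b k) = c0e k := by
  ext m
  rw [ggg_apply hab]
  simp only [c0e_apply]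
  by_cases hm : m = k
  · subst hm; simp
  · have : ttt a b m ≠ ttt a b k := fun he => hm (ttt_inj hab he)
    simp [hm, this]

lemma division_strictMonoOn {a b : ℝ} {n : ℕ} {α : ℕ → ℝ} (hα : IsDivision a b n α) :
    ∀ i j, i < j → j ≤ n → α i < α j := by
  intro i j hij hjn
  induction j with
  | zero => omega
  | succ j ih =>
    rcases Nat.lt_or_ge i j with h | h
    · exact (ih h (by omega)).trans (hα.2.2 j (by omega))
    · have : i = j := by omega
      subst this
      exact hα.2.2 i (by omega)

/-- at most one index in a division hits a given value -/
lemma abs_ite_sum_le {n : ℕ} (c : ℕ → ℝ) (hc : ∀ j, |c j| ≤ 1)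
    (P : ℕ → Prop) [DecidablePred P] (hP : ∀ i < n, ∀ j < n, P i → P j → i = j) :
    |∑ j ∈ Finset.range n, if P j then c j else 0| ≤ 1 := by
  rw [Finset.sum_ite, Finset.sum_const_zero, add_zero]
  set s := (Finset.range n).filter P with hs
  have hcard : s.card ≤ 1 := by
    apply Finset.card_le_one.2
    intro i hi j hj
    rw [hs, Finset.mem_filter, Finset.mem_range] at hi hj
    exact hP i hi.1 j hj.1 hi.2 hj.2
  calc |∑ j ∈ s, c j| ≤ ∑ j ∈ s, |c j| := Finset.abs_sum_le_sum_abs _ _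
    _ ≤ ∑ _j ∈ s, 1 := Finset.sum_le_sum fun j _ => hc j
    _ = s.card := by simp
    _ ≤ 1 := by exact_mod_cast hcard

/-- Key estimate: combinations of increments of `ggg` along a division have norm `≤ 2`. -/
lemma key_estimate {a b : ℝ} (hab : a < b) (n : ℕ) (α : ℕ → ℝ) (hα : IsDivision a b n α)
    (c : ℕ → ℝ) (hc : ∀ j, |c j| ≤ 1) :
    ‖∑ j ∈ Finset.range n, c j • (ggg a b (α (j + 1)) - ggg a b (α j))‖ ≤ 2 := by
  apply c0norm_le _ 2 (by norm_num)
  intro m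
  have hcoe : (∑ j ∈ Finset.range n, c j • (ggg a b (α (j + 1)) - ggg a b (α j))) m
      = ∑ j ∈ Finset.range n, c j * ((ggg a b (α (j + 1))) m - (ggg a b (α j)) m) := by
    have hsum : ∀ (t : Finset ℕ) (φ : ℕ → C₀(ℕ, ℝ)), (∑ j ∈ t, φ j) m = ∑ j ∈ t, φ j m := by
      intro t φ
      induction t using Finset.cons_induction with
      | empty => simp
      | cons j t hj ih =>
        rw [Finset.sum_cons, Finset.sum_cons, ZeroAtInftyContinuousMap.coe_add, Pi.add_apply, ih]
    rw [hsum]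
    refine Finset.sum_congr rfl fun j _ => ?_
    rw [ZeroAtInftyContinuousMap.coe_smul, Pi.smul_apply, ZeroAtInftyContinuousMap.coe_sub,
      Pi.sub_apply, smul_eq_mul]
  rw [hcoe]
  have heq : ∀ j, c j * ((ggg a b (α (j + 1))) m - (ggg a b (α j)) m)
      = (if ttt a b m = α (j + 1) then c j else 0) - (if ttt a b m = α j then c j else 0) := by
    intro j
    rw [ggg_apply hab, ggg_apply hab]
    split <;> split <;> ring
  simp only [heq]
  rw [Finset.sum_sub_distrib]
  have inj := division_strictMonoOn hα
  have h1 : |∑ j ∈ Finset.range n, if ttt a b m = α (j + 1) then c j else 0| ≤ 1 := by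
    apply abs_ite_sum_le c hc
    intro i hi j hj hPi hPj
    by_contra hne
    rcases Nat.lt_or_ge i j with h | h
    · exact absurd (hPi.symm.trans hPj) (ne_of_lt (inj _ _ (by omega) (by omega)))
    · exact absurd (hPj.symm.trans hPi) (ne_of_lt (inj _ _ (by omega) (by omega)))
  have h2 : |∑ j ∈ Finset.range n, if ttt a b m = α j then c j else 0| ≤ 1 := by
    apply abs_ite_sum_le c hc
    intro i hi j hj hPi hPj
    by_contra hne
    rcases Nat.lt_or_ge i j with h | h
    · exact absurd (hPi.symm.trans hPj) (ne_of_lt (inj _ _ (by omega) (by omega)))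
    · exact absurd (hPj.symm.trans hPi) (ne_of_lt (inj _ _ (by omega) (by omega)))
  calc |_ - _| ≤ |_| + |_| := abs_sub _ _
    _ ≤ 1 + 1 := add_le_add h1 h2
    _ = 2 := by norm_num

theorem exists_semivar_not_simplyRegulated_of_containsC0
    {X : Type*} [NormedAddCommGroup X] [NormedSpace ℝ X] [CompleteSpace X]
    (hX : ContainsC0Copy X)
    (a b : ℝ) (hab : a < b) :
    ∃ F : ℝ → X →L[ℝ] X, semivar a b F < ⊤ ∧
      ¬ ∀ x : X,
        (∀ t ∈ Set.Ioc a b, ∃ L : X,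
          Filter.Tendsto (fun s => F s x) (𝓝[Set.Ico a t] t) (𝓝 L)) ∧
        (∀ t ∈ Set.Ico a b, ∃ L : X,
          Filter.Tendsto (fun s => F s x) (𝓝[Set.Ioc t b] t) (𝓝 L)) := by
  obtain ⟨ψ, C₁, C₂, hC₁, hC₂, hψ⟩ := hX
  set x₀ : X := ψ (c0e 0) with hx₀def
  have hx₀norm : C₁ ≤ ‖x₀‖ := by
    have := (hψ (c0e 0)).1
    rwa [c0e_norm, mul_one] at this
  have hx₀pos : 0 < ‖x₀‖ := lt_of_lt_of_le hC₁ hx₀norm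
  have hx₀ne : x₀ ≠ 0 := by
    intro h; rw [h, norm_zero] at hx₀pos; exact lt_irrefl 0 hx₀pos
  obtain ⟨f, hf1, hfx⟩ := exists_dual_vector ℝ x₀ (norm_ne_zero_iff.2 hx₀ne)
  refine ⟨fun s => f.smulRight (ψ (ggg a b s)), ?_, ?_⟩
  · -- bounded semivariation
    have hbound : ∀ (n : ℕ) (α : ℕ → ℝ), IsDivision a b n α → ∀ (x : ℕ → X),
        (∀ j, ‖x j‖ ≤ 1) →
        ‖∑ j ∈ Finset.range n,
          ((fun s => f.smulRight (ψ (ggg a b s))) (α (j + 1))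
            - (fun s => f.smulRight (ψ (ggg a b s))) (α j)) (x j)‖ ≤ 2 * C₂ := by
      intro n α hα x hx
      have heq : ∀ j, ((f.smulRight (ψ (ggg a b (α (j + 1))))
            - f.smulRight (ψ (ggg a b (α j)))) (x j))
          = ψ (f (x j) • (ggg a b (α (j + 1)) - ggg a b (α j))) := by
        intro j
        simp [map_smul, map_sub, smul_sub]
      simp only [heq]
      rw [← map_sum ψ]
      have hc : ∀ j, |f (x j)| ≤ 1 := by
        intro j
        calc |f (x j)| ≤ ‖f‖ * ‖x j‖ := f.le_opNorm (x j)
          _ ≤ 1 * 1 := by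
              apply mul_le_mul (le_of_eq hf1) (hx j) (norm_nonneg _) zero_le_one
          _ = 1 := one_mul 1
      have := key_estimate hab n α hα (fun j => f (x j)) hc
      calc ‖ψ (∑ j ∈ Finset.range n, f (x j) • (ggg a b (α (j + 1)) - ggg a b (α j)))‖
          ≤ C₂ * ‖∑ j ∈ Finset.range n, f (x j) • (ggg a b (α (j + 1)) - ggg a b (α j))‖ :=
            (hψ _).2
        _ ≤ C₂ * 2 := by
            apply mul_le_mul_of_nonneg_left this hC₂.le
        _ = 2 * C₂ := mul_comm _ _
    have : semivar a b (fun s => f.smulRight (ψ (ggg a b s))) ≤ ENNReal.ofReal (2 * C₂) := by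
      apply iSup_le; intro n
      apply iSup_le; intro α
      apply iSup_le; intro hα
      apply iSup_le; intro x
      apply iSup_le; intro hx
      exact ENNReal.ofReal_le_ofReal (hbound n α hα x hx)
    exact lt_of_le_of_lt this ENNReal.ofReal_lt_top
  · -- not simply regulated
    intro H
    obtain ⟨H1, _⟩ := H x₀
    obtain ⟨L, hL⟩ := H1 b ⟨hab, le_refl b⟩
    -- F s x₀ = ‖x₀‖ • ψ (ggg a b s)
    have hF : ∀ s : ℝ, (f.smulRight (ψ (ggg a b s))) x₀ = ‖x₀‖ • ψ (ggg a b s) := by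
      intro s
      simp only [ContinuousLinearMap.smulRight_apply]
      rw [hfx]
      norm_num
    -- limit along midpoints is 0
    set ss : ℕ → ℝ := fun k => (ttt a b k + ttt a b (k + 1)) / 2 with hssdef
    have hssmem : ∀ k, ss k ∈ Set.Ico a b := by
      intro k
      have h1 := ttt_mem hab k
      have h2 := ttt_mem hab (k + 1)
      constructor
      · have := h1.1; have := h2.1
        show a ≤ (ttt a b k + ttt a b (k + 1)) / 2
        linarith
      · have := h1.2; have := h2.2
        show (ttt a b k + ttt a b (k + 1)) / 2 < b
        linarith
    have hsslt : ∀ k, ttt a b k < ss k ∧ ss k < ttt a b (k + 1) := by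
      intro k
      have := ttt_strictMono hab (Nat.lt_succ_self k)
      constructor
      · show ttt a b k < (ttt a b k + ttt a b (k + 1)) / 2; linarith
      · show (ttt a b k + ttt a b (k + 1)) / 2 < ttt a b (k + 1); linarith
    have hggss : ∀ k, ggg a b (ss k) = 0 := by
      intro k
      ext m
      rw [ggg_apply hab]
      rw [if_neg, ZeroAtInftyContinuousMap.coe_zero, Pi.zero_apply]
      intro hm
      have h1 := (hsslt k).1
      have h2 := (hsslt k).2
      rw [← hm] at h1 h2
      have hmk : k < m := (ttt_strictMono hab).lt_iff_lt.1 h1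
      have hmk2 : m < k + 1 := (ttt_strictMono hab).lt_iff_lt.1 h2
      omega
    have hsstend : Tendsto ss atTop (𝓝 b) := by
      have h1 := ttt_tendsto hab
      have h2 := h1.comp (tendsto_add_atTop_nat 1)
      have := (h1.add h2).div_const 2
      simpa [hssdef, Function.comp] using this
    have htttend := ttt_tendsto hab
    -- to nhdsWithin
    have hss_within : Tendsto ss atTop (𝓝[Set.Ico a b] b) :=
      tendsto_nhdsWithin_iff.2 ⟨hsstend, Eventually.of_forall hssmem⟩
    have httt_within : Tendsto (ttt a b) atTop (𝓝[Set.Ico a b] b) :=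
      tendsto_nhdsWithin_iff.2 ⟨htttend, Eventually.of_forall (ttt_mem hab)⟩
    have hLzero : L = 0 := by
      have h1 : Tendsto (fun k => (f.smulRight (ψ (ggg a b (ss k)))) x₀) atTop (𝓝 L) :=
        hL.comp hss_within
      have h2 : (fun k => (f.smulRight (ψ (ggg a b (ss k)))) x₀) = fun _ => (0 : X) := by
        funext k
        rw [hF, hggss k]
        simp
      rw [h2] at h1
      exact (tendsto_nhds_unique tendsto_const_nhds h1).symm
    have h3 : Tendsto (fun k => (f.smulRight (ψ (ggg a b (ttt a b k)))) x₀) atTop (𝓝 L) :=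
      hL.comp httt_within
    rw [hLzero] at h3
    have h4 : Tendsto (fun k => ‖(f.smulRight (ψ (ggg a b (ttt a b k)))) x₀‖) atTop (𝓝 0) := by
      have := h3.norm
      simpa using this
    have h5 : ∀ k, ‖x₀‖ * C₁ ≤ ‖(f.smulRight (ψ (ggg a b (ttt a b k)))) x₀‖ := by
      intro k
      rw [hF, ggg_ttt hab k]
      rw [norm_smul]
      simp only [Real.norm_eq_abs, abs_of_pos hx₀pos]
      apply mul_le_mul_of_nonneg_left _ hx₀pos.le
      have := (hψ (c0e k)).1
      rwa [c0e_norm, mul_one] at this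
    have hpos : 0 < ‖x₀‖ * C₁ := mul_pos hx₀pos hC₁
    have := h4.eventually (eventually_lt_nhds hpos) |>.exists
    obtain ⟨k, hk⟩ := this
    exact absurd (h5 k) (not_le.2 hk)
end
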